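/- arXiv:1902.00014 — 4 statements merged into one kernel-verified Lean document; each statement's English description precedes it below -/
import Mathlib

section
/- Let C be an EL concept, built from concept names, ⊤, conjunction ⊓, and existential restriction ∃R.D. For every nonempty family of interpretations {I_i | i ∈ ι} and every element f of the product ∏I: f ∈ C^{∏I} if and only if f(i) ∈ C^{I_i} for every i ∈ ι. -/
/-- A DL interpretation with domain `D`, concept names `CN`, role names `RN`. -/
structure Interp (D CN RN : Type) where
  conc : CN → Set D
  rol : RN → D → D → Prop
/-- The direct product of a family of interpretations. -/
def prodInterp {ι : Type} {D : ι → Type} {CN RN : Type}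
    (I : ∀ i, Interp (D i) CN RN) : Interp (∀ i, D i) CN RN where
  conc A := {f | ∀ i, f i ∈ (I i).conc A}
  rol r f g := ∀ i, (I i).rol r (f i) (g i)
/-- EL concepts: `⊤`, concept names, conjunction, existential restriction. -/
inductive ELConcept (CN RN : Type) where
  | top
  | atom (A : CN)
  | conj (c d : ELConcept CN RN)
  | ex (r : RN) (c : ELConcept CN RN)

/-- Semantics of EL concepts in an interpretation. -/
def elSem {D CN RN : Type} (I : Interp D CN RN) : ELConcept CN RN → Set D
  | .top => Set.univ
  | .atom A => I.conc A
  | .conj c d => elSem I c ∩ elSem I d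
  | .ex r c => {x | ∃ y, I.rol r x y ∧ y ∈ elSem I c}

/-- An element of the product of a nonempty family of interpretations
satisfies an EL concept iff all of its components do. -/
theorem elSem_prod_iff {ι : Type} [Nonempty ι] {D : ι → Type} {CN RN : Type}
    (I : ∀ i, Interp (D i) CN RN) (c : ELConcept CN RN) (f : ∀ i, D i) :
    f ∈ elSem (prodInterp I) c ↔ ∀ i, f i ∈ elSem (I i) c := by
  induction c generalizing f with
  | top => simp [elSem]
  | atom A => exact Iff.rfl
  | conj c d ihc ihd =>
      simp only [elSem, Set.mem_inter_iff, ihc, ihd]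
      constructor
      · rintro ⟨h1, h2⟩ i; exact ⟨h1 i, h2 i⟩
      · intro h; exact ⟨fun i => (h i).1, fun i => (h i).2⟩
  | ex r c ih =>
      constructor
      · rintro ⟨g, hr, hg⟩ i
        exact ⟨g i, hr i, (ih g).mp hg i⟩
      · intro h
        choose g hr hg using h
        exact ⟨g, hr, (ih g).mpr hg⟩
end

section
/- If C and D are EL concepts and every member I_i of a nonempty family of interpretations satisfies the concept inclusion C ⊑ D (i.e., C^{I_i} ⊆ D^{I_i}), then the product ∏I also satisfies C ⊑ D. Consequently, the class of models of any TBox consisting of concept inclusions between EL concepts is closed under direct products. -/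
lemma elSem_prod {ι : Type} {D : ι → Type} {CN RN : Type}
    (I : ∀ i, Interp (D i) CN RN) (c : ELConcept CN RN) (f : ∀ i, D i) :
    f ∈ elSem (prodInterp I) c ↔ ∀ i, f i ∈ elSem (I i) c := by
  induction c generalizing f with
  | top => simp [elSem]
  | atom A => simp [elSem, prodInterp]
  | conj c d ihc ihd =>
    simp only [elSem, Set.mem_inter_iff, ihc, ihd]
    exact ⟨fun ⟨h1, h2⟩ i => ⟨h1 i, h2 i⟩, fun h => ⟨fun i => (h i).1, fun i => (h i).2⟩⟩
  | ex r c ih =>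
    constructor
    · rintro ⟨g, hr, hg⟩ i
      exact ⟨g i, hr i, (ih g).mp hg i⟩
    · intro h
      choose g hr hg using h
      exact ⟨g, hr, (ih g).mpr hg⟩

/-- EL concept inclusions are preserved under direct products of nonempty
families; consequently the models of any TBox of EL concept inclusions are
closed under direct products. -/
theorem el_inclusion_prod {ι : Type} [Nonempty ι] {D : ι → Type} {CN RN : Type}
    (I : ∀ i, Interp (D i) CN RN) :
    (∀ c d : ELConcept CN RN,
      (∀ i, elSem (I i) c ⊆ elSem (I i) d) →
      elSem (prodInterp I) c ⊆ elSem (prodInterp I) d) ∧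
    (∀ T : Set (ELConcept CN RN × ELConcept CN RN),
      (∀ i, ∀ p ∈ T, elSem (I i) p.1 ⊆ elSem (I i) p.2) →
      ∀ p ∈ T, elSem (prodInterp I) p.1 ⊆ elSem (prodInterp I) p.2) := by
  have key : ∀ c d : ELConcept CN RN,
      (∀ i, elSem (I i) c ⊆ elSem (I i) d) →
      elSem (prodInterp I) c ⊆ elSem (prodInterp I) d := by
    intro c d h f hf
    exact (elSem_prod I d f).mpr fun i => h i ((elSem_prod I c f).mp hf i)
  exact ⟨key, fun T hT p hp => key p.1 p.2 fun i => hT i p hp⟩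
end

section
/- Hennessy–Milner property for simulations: let I and J be interpretations with J finite (or, more generally, finitely branching), and fix a signature Σ. Define the relation S ⊆ Δ^I × Δ^J by (d,e) ∈ S iff for every EL concept C over Σ, d ∈ C^I implies e ∈ C^J. Then S is a Σ-simulation from I to J. Consequently, for finite J, (I,d) ≤_Σ (J,e) holds if and only if every Σ-EL concept true at d in I is true at e in J. -/
/-- The EL concept `c` uses only symbols from the signature `(SC, SR)`. -/
def ELConcept.InSig {CN RN : Type} (SC : Set CN) (SR : Set RN) :
    ELConcept CN RN → Prop
  | .top => True
  | .atom A => A ∈ SC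
  | .conj c d => c.InSig SC SR ∧ d.InSig SC SR
  | .ex r c => r ∈ SR ∧ c.InSig SC SR
/-- `S` is a `Σ`-simulation from `I` to `J` (for signature `(SC, SR)`). -/
def IsSimulation {D E CN RN : Type} (SC : Set CN) (SR : Set RN)
    (I : Interp D CN RN) (J : Interp E CN RN) (S : D → E → Prop) : Prop :=
  (∀ A ∈ SC, ∀ d d', S d d' → d ∈ I.conc A → d' ∈ J.conc A) ∧
  (∀ r ∈ SR, ∀ d e d', S d d' → I.rol r d e → ∃ e', J.rol r d' e' ∧ S e e')

/-- `(I, d) ≤_Σ (J, e)`: some `Σ`-simulation contains `(d, e)`. -/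
def SimLE {D E CN RN : Type} (SC : Set CN) (SR : Set RN)
    (I : Interp D CN RN) (J : Interp E CN RN) (d : D) (e : E) : Prop :=
  ∃ S, IsSimulation SC SR I J S ∧ S d e

def ELEntails {D E CN RN : Type} (SC : Set CN) (SR : Set RN)
    (I : Interp D CN RN) (J : Interp E CN RN) (d : D) (e : E) : Prop :=
  ∀ c : ELConcept CN RN, c.InSig SC SR → d ∈ elSem I c → e ∈ elSem J c

section
variable {D E CN RN : Type} {SC : Set CN} {SR : Set RN}
  {I : Interp D CN RN} {J : Interp E CN RN}

theorem IsSimulation.mem_elSem {S : D → E → Prop} (hS : IsSimulation SC SR I J S)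
    {c : ELConcept CN RN} (hc : c.InSig SC SR) {d : D} {e : E} (hde : S d e)
    (hd : d ∈ elSem I c) : e ∈ elSem J c := by
  induction c generalizing d e with
  | top => trivial
  | atom A => exact hS.1 A hc d e hde hd
  | conj c₁ c₂ ih₁ ih₂ => exact ⟨ih₁ hc.1 hde hd.1, ih₂ hc.2 hde hd.2⟩
  | ex r c ih =>
    obtain ⟨y, hdy, hy⟩ := hd
    obtain ⟨e', hee', hye'⟩ := hS.2 r hc.1 d y e hde hdy
    exact ⟨e', hee', ih hc.2 hye' hy⟩

theorem ELEntails.of_simLE {d : D} {e : E} (h : SimLE SC SR I J d e) :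
    ELEntails SC SR I J d e :=
  let ⟨_, hS, hde⟩ := h
  fun _ hc hd => hS.mem_elSem hc hde hd

theorem exists_inSig_separating {T : Set E} (hT : T.Finite) {d : D}
    (hsep : ∀ e ∈ T, ¬ ELEntails SC SR I J d e) :
    ∃ c : ELConcept CN RN, c.InSig SC SR ∧ d ∈ elSem I c ∧ ∀ e ∈ T, e ∉ elSem J c := by
  induction T, hT using Set.Finite.induction_on with
  | empty => exact ⟨.top, trivial, trivial, fun _ h => h.elim⟩
  | @insert a T _ _ ih =>
    obtain ⟨c, hc, hdc, hTc⟩ := ih fun e he => hsep e (Set.mem_insert_of_mem a he)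
    obtain ⟨c', hc', hdc', hac'⟩ : ∃ c', c'.InSig SC SR ∧ d ∈ elSem I c' ∧ a ∉ elSem J c' := by
      simpa [ELEntails] using hsep a (Set.mem_insert a T)
    refine ⟨.conj c' c, ⟨hc', hc⟩, ⟨hdc', hdc⟩, ?_⟩
    rintro e (rfl | he) ⟨he₁, he₂⟩
    exacts [hac' he₁, hTc e he he₂]

theorem isSimulation_elEntails (hfb : ∀ (e : E) (r : RN), {e' | J.rol r e e'}.Finite) :
    IsSimulation SC SR I J (ELEntails SC SR I J) := by
  refine ⟨fun A hA d e hde hd => hde (.atom A) hA hd, fun r hr d d₁ e hde hdd₁ => ?_⟩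
  by_contra! hnone
  obtain ⟨c, hc, hd₁c, hsucc⟩ := exists_inSig_separating (hfb e r) hnone
  obtain ⟨e₁, hee₁, he₁c⟩ := hde (.ex r c) ⟨hr, hc⟩ ⟨d₁, hdd₁, hd₁c⟩
  exact hsucc e₁ hee₁ he₁c

end

/-- Hennessy–Milner property: if `J` is finitely branching, then the relation
"every Σ-EL concept true at `d` in `I` is true at `e` in `J`" is itself a
Σ-simulation from `I` to `J`; consequently `(I, d) ≤_Σ (J, e)` holds iff
every Σ-EL concept true at `d` is true at `e`. -/
theorem hennessy_milner {D E CN RN : Type}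
    (SC : Set CN) (SR : Set RN) (I : Interp D CN RN) (J : Interp E CN RN)
    (hfb : ∀ (e : E) (r : RN), {e' | J.rol r e e'}.Finite) :
    IsSimulation SC SR I J
      (fun d e => ∀ c : ELConcept CN RN,
        c.InSig SC SR → d ∈ elSem I c → e ∈ elSem J c) ∧
    (∀ (d : D) (e : E),
      SimLE SC SR I J d e ↔
        ∀ c : ELConcept CN RN,
          c.InSig SC SR → d ∈ elSem I c → e ∈ elSem J c) := by
  have hsim : IsSimulation SC SR I J (ELEntails SC SR I J) := isSimulation_elEntails hfb
  exact ⟨hsim, fun d e => ⟨ELEntails.of_simLE, fun h => ⟨_, hsim, h⟩⟩⟩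
end

section
/- Simulation from a ditree yields a homomorphism: let I be a ditree interpretation, i.e., the directed graph on Δ^I whose edges are the pairs belonging to some role relation is a directed tree with root r, and distinct role names have disjoint interpretations. If (I, r) ≤_Σ (J, e) for some interpretation J, and every concept and role name interpreted nonempty in I belongs to Σ, then there exists a Σ-homomorphism h : I → J with h(r) = e. -/
/-- `h` is a `Σ`-homomorphism from `I` to `J` (for signature `(SC, SR)`). -/
def IsHom {D E CN RN : Type} (SC : Set CN) (SR : Set RN)
    (I : Interp D CN RN) (J : Interp E CN RN) (h : D → E) : Prop :=
  (∀ A ∈ SC, ∀ d, d ∈ I.conc A → h d ∈ J.conc A) ∧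
  (∀ r ∈ SR, ∀ d e, I.rol r d e → J.rol r (h d) (h e))
/-- The edge relation of an interpretation: an edge from `d` to `e`
whenever `(d, e)` belongs to some role relation. -/
def Edge {D CN RN : Type} (I : Interp D CN RN) (d e : D) : Prop :=
  ∃ r, I.rol r d e

/-- `I` is a ditree interpretation with root `root`: the edge graph is a
directed tree rooted at `root`, and distinct role names have disjoint
interpretations. -/
def IsDitree {D CN RN : Type} (I : Interp D CN RN) (root : D) : Prop :=
  (∀ d, Relation.ReflTransGen (Edge I) root d) ∧
  (∀ d, ¬ Edge I d root) ∧
  (∀ e, e ≠ root → ∃! d, Edge I d e) ∧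
  (∀ r s d e, I.rol r d e → I.rol s d e → r = s)

/-- If `I` is a ditree interpretation with root `root`, every symbol
interpreted nonempty in `I` belongs to `Σ`, and `(I, root) ≤_Σ (J, e)`,
then there is a Σ-homomorphism `h : I → J` with `h root = e`. -/
theorem simulation_from_ditree_gives_hom {D E CN RN : Type}
    (SC : Set CN) (SR : Set RN) (I : Interp D CN RN) (root : D)
    (hI : IsDitree I root)
    (hSC : ∀ A : CN, (I.conc A).Nonempty → A ∈ SC)
    (hSR : ∀ r : RN, (∃ d e, I.rol r d e) → r ∈ SR)
    (J : Interp E CN RN) (e : E) (hsim : SimLE SC SR I J root e) :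
    ∃ h : D → E, IsHom SC SR I J h ∧ h root = e := by

  classical
  obtain ⟨S, hSsim, hSroot⟩ := hsim
  obtain ⟨hreach, hnoroot, huniq, hrole⟩ := hI
  -- well-foundedness of the parent relation
  have hwf : WellFounded (fun p c : D => Edge I p c) := by
    constructor
    intro d
    induction hreach d with
    | refl => exact Acc.intro _ (fun y hy => absurd hy (hnoroot y))
    | @tail b c _ hed ih =>
      refine Acc.intro _ (fun y hy => ?_)
      have hne : c ≠ root := fun h => hnoroot b (h ▸ hed)
      obtain ⟨p, _, hpu⟩ := huniq c hne
      rw [hpu y hy, ← hpu b hed]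
      exact ih
  let F : ∀ d : D, (∀ p, Edge I p d → {x : E // S p x}) → {x : E // S d x} :=
    fun d rec =>
      if h : d = root then ⟨e, h ▸ hSroot⟩
      else
        let hp : ∃ p, Edge I p d := (huniq d h).exists
        let p := Classical.choose hp
        let hpd : Edge I p d := Classical.choose_spec hp
        let r := Classical.choose hpd
        let hr : I.rol r p d := Classical.choose_spec hpd
        let x := rec p hpd
        let hex : ∃ y, J.rol r x.1 y ∧ S d y :=
          hSsim.2 r (hSR r ⟨p, d, hr⟩) p d x.1 x.2 hr
        ⟨Classical.choose hex, (Classical.choose_spec hex).2⟩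
  let g := hwf.fix F
  have hfix : ∀ d, g d = F d (fun p _ => g p) := fun d => hwf.fix_eq F d
  refine ⟨fun d => (g d).1, ⟨?_, ?_⟩, ?_⟩
  · intro A hA d hd
    exact hSsim.1 A hA d (g d).1 (g d).2 hd
  · intro s _ d c hrol
    have hEd : Edge I d c := ⟨s, hrol⟩
    have hne : c ≠ root := fun h => hnoroot d (h ▸ hEd)
    show J.rol s (g d).1 (g c).1
    rw [hfix c]
    simp only [F, dif_neg hne]
    have hp : ∃ p, Edge I p c := (huniq c hne).exists
    have hpd : Classical.choose hp = d := by
      obtain ⟨p0, hp0, hu⟩ := huniq c hne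
      rw [hu _ (Classical.choose_spec hp), hu d hEd]
    revert hrol hEd
    rw [← hpd]
    intro hrol hEd
    set p := Classical.choose hp with hpdef
    have hpc : Edge I p c := Classical.choose_spec hp
    have hrs : Classical.choose hpc = s :=
      hrole _ s p c (Classical.choose_spec hpc) hrol
    rw [← hrs]
    exact (Classical.choose_spec (hSsim.2 (Classical.choose hpc)
      (hSR _ ⟨p, c, Classical.choose_spec hpc⟩) p c (g p).1 (g p).2
      (Classical.choose_spec hpc))).1
  · show (g root).1 = e
    rw [hfix root]
    simp only [F, dif_pos rfl]
end
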